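/- Let (G, C, ∂) and (G', C', ∂') be crossed modules of commutative k-algebras, let f = (f₁, f₀) and g = (g₁, g₀) be crossed module morphisms (G, C, ∂) → (G', C', ∂'), and let h be a homotopy connecting f to g (an f₀-derivation with g₀ = f₀ + ∂' ∘ h and g₁ = f₁ + h ∘ ∂). Define δ : C → G' ⋊ C' by δ(x) = (h(x), f₀(x)). Then δ is a homotopy connecting the induced 2-algebra morphisms F = (F₁, f₀) and G = (G₁, g₀), where F₁(a, x) = (f₁(a), f₀(x)) and G₁(a, x) = (g₁(a), g₀(x)): δ is a k-algebra morphism with respect to the semidirect product multiplication, s' ∘ δ = f₀, t' ∘ δ = g₀, and F₁(a, x) ∘' δ(t(a, x)) = δ(s(a, x)) ∘' G₁(a, x) for all (a, x) ∈ G ⋊ C, where s(a, x) = x, t(a, x) = ∂(a) + x, s'(a', x') = x', t'(a', x') = ∂'(a') + x', e'(x') = (0, x'), and u ∘' v := u + v − e'(s'(v)). -/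
import Mathlib


/-- A crossed module of commutative k-algebras. -/
structure XMod (k C R : Type*) [CommRing k]
    [NonUnitalCommRing C] [Module k C] [SMulCommClass k C C] [IsScalarTower k C C]
    [NonUnitalCommRing R] [Module k R] [SMulCommClass k R R] [IsScalarTower k R R] where
  d : C →ₙₐ[k] R
  act : R →ₗ[k] C →ₗ[k] C
  act_act : ∀ (r r' : R) (c : C), act (r * r') c = act r (act r' c)
  act_mul_left : ∀ (r : R) (c c' : C), act r (c * c') = act r c * c'
  act_mul_right : ∀ (r : R) (c c' : C), act r (c * c') = c * act r c'
  cm1 : ∀ (r : R) (c : C), d (act r c) = r * d c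
  cm2 : ∀ (c c' : C), act (d c) c' = c * c'

/-- Multiplication of the semidirect product G ⋊ C:
`(g, c)(g', c') = (c ▶ g' + c' ▶ g + g g', c c')`. -/
def sdMul {k G C : Type*} [CommRing k]
    [NonUnitalCommRing G] [Module k G] [SMulCommClass k G G] [IsScalarTower k G G]
    [NonUnitalCommRing C] [Module k C] [SMulCommClass k C C] [IsScalarTower k C C]
    (X : XMod k G C) (p q : G × C) : G × C :=
  (X.act p.2 q.1 + X.act q.2 p.1 + p.1 * q.1, p.2 * q.2)

/-- Let h be a homotopy connecting crossed module morphisms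
f = (f₁, f₀) and g = (g₁, g₀) : (G, C, ∂) → (G', C', ∂'). Then
δ(x) = (h x, f₀ x) : C → G' ⋊ C' is a homotopy connecting the induced 2-algebra
morphisms F₁(a, x) = (f₁ a, f₀ x) and G₁(a, x) = (g₁ a, g₀ x): it is a k-algebra
morphism, s' ∘ δ = f₀, t' ∘ δ = g₀, and
F₁(a,x) ∘' δ(t(a,x)) = δ(s(a,x)) ∘' G₁(a,x), where s(a,x) = x, t(a,x) = ∂(a) + x,
e'(x') = (0, x') and u ∘' v := u + v - e'(s' v). -/
theorem crossed_module_homotopy_gives_two_algebra_homotopy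
    {k G C G' C' : Type*} [CommRing k]
    [NonUnitalCommRing G] [Module k G] [SMulCommClass k G G] [IsScalarTower k G G]
    [NonUnitalCommRing C] [Module k C] [SMulCommClass k C C] [IsScalarTower k C C]
    [NonUnitalCommRing G'] [Module k G'] [SMulCommClass k G' G'] [IsScalarTower k G' G']
    [NonUnitalCommRing C'] [Module k C'] [SMulCommClass k C' C'] [IsScalarTower k C' C']
    (X : XMod k G C) (X' : XMod k G' C')
    (f₁ g₁ : G →ₙₐ[k] G') (f₀ g₀ : C →ₙₐ[k] C')
    (hf_d : ∀ a : G, X'.d (f₁ a) = f₀ (X.d a))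
    (hf_act : ∀ (x : C) (a : G), f₁ (X.act x a) = X'.act (f₀ x) (f₁ a))
    (hg_d : ∀ a : G, X'.d (g₁ a) = g₀ (X.d a))
    (hg_act : ∀ (x : C) (a : G), g₁ (X.act x a) = X'.act (g₀ x) (g₁ a))
    (h : C →ₗ[k] G')
    (hh : ∀ x x' : C,
      h (x * x') = X'.act (f₀ x) (h x') + X'.act (f₀ x') (h x) + h x * h x')
    (hg₀ : ∀ x : C, g₀ x = f₀ x + X'.d (h x))
    (hg₁ : ∀ a : G, g₁ a = f₁ a + h (X.d a)) :
    -- δ is a k-algebra morphism into G' ⋊ C'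
    (∀ x x' : C, ((h (x + x'), f₀ (x + x')) : G' × C') = (h x, f₀ x) + (h x', f₀ x')) ∧
    (∀ (κ : k) (x : C), ((h (κ • x), f₀ (κ • x)) : G' × C') = κ • ((h x, f₀ x) : G' × C')) ∧
    (∀ x x' : C, ((h (x * x'), f₀ (x * x')) : G' × C')
      = sdMul X' (h x, f₀ x) (h x', f₀ x')) ∧
    -- s' ∘ δ = f₀ and t' ∘ δ = g₀
    (∀ x : C, ((h x, f₀ x) : G' × C').2 = f₀ x) ∧
    (∀ x : C, X'.d (h x) + f₀ x = g₀ x) ∧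
    -- the 2-cell (naturality) condition
    (∀ (a : G) (x : C),
      ((f₁ a, f₀ x) : G' × C') + (h (X.d a + x), f₀ (X.d a + x))
          - ((0 : G'), f₀ (X.d a + x))
        = ((h x, f₀ x) : G' × C') + (g₁ a, g₀ x) - ((0 : G'), g₀ x)) := by
  refine ⟨?_, ?_, ?_, ?_, ?_, ?_⟩
  · intro x x'; simp [Prod.ext_iff, map_add]
  · intro κ x; simp [Prod.ext_iff, map_smul]
  · intro x x'; simp [Prod.ext_iff, sdMul, hh, map_mul]
  · intro x; rfl
  · intro x; rw [hg₀]; abel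
  · intro a x
    simp only [Prod.mk_add_mk, Prod.mk_sub_mk, Prod.ext_iff, map_add, hg₀, hg₁]
    constructor <;> abel
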